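/- arXiv:1307.6377 — 3 statements merged into one kernel-verified Lean document; each statement's English description precedes it below -/
import Mathlib

section
/- Let d ≥ 1, let U be a d×d unitary complex matrix, and let Λ be a d×d diagonal complex matrix. For n ∈ ℕ define M_n = (U − I) + 2πn(U + I) − i(U + I)Λ. Then there exists n₀ such that M_n is invertible for all n ≥ n₀, and the matrices σ_n = −M_n⁻¹ · ((U − I) − 2πn(U + I) + i(U + I)Λ) converge, as n → ∞, to I − 2P, where P is the matrix of the orthogonal projection of ℂ^d onto the eigenspace ker(U + I) of U for the eigenvalue −1. -/
/-!
Let `A = U + 1`, `C = (U - 1) - i A Λ` and let `P` be the orthogonal projection onto `ker A`.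
Since `U` is unitary, `A` is normal, so `A P = P A = 0`, and hence `P C = -2 P`. With
`Q = 1 - P`, the matrix `M_t = C + t A` factors as `M_t = (A + C P + t⁻¹ C Q) (P + t Q)`.
The first factor tends to `A + C P` as `t → ∞`, which is invertible because
`P (A + C P) = -2 P` and `ker A ∩ ker P = 0`; the second one is inverted explicitly. Hence
`M_t⁻¹ → P (A + C P)⁻¹ = -P/2`. Since `M_t + N_t = 2 (U - 1)` for the second matrix `N_t` in
`σ_t = -M_t⁻¹ N_t`, we get `σ_t = 1 - 2 M_t⁻¹ (U - 1) → 1 + P (U - 1) = 1 - 2 P`.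
-/

open Filter Matrix Topology Bornology

section Factorization

variable {𝕜 R : Type*} [Field 𝕜] [Ring R] [Algebra 𝕜 R] {A C P : R}

theorem add_smul_eq_mul_of_mul_isIdempotentElem (hP : IsIdempotentElem P) (hAP : A * P = 0)
    {t : 𝕜} (ht : t ≠ 0) :
    C + t • A = (A + C * P + t⁻¹ • (C * (1 - P))) * (P + t • (1 - P)) := by
  have hAQ : A * (1 - P) = A := by rw [mul_sub, mul_one, hAP, sub_zero]
  have hCQ : C * (1 - P) * (P + t • (1 - P)) = t • (C * (1 - P)) := by
    rw [mul_assoc, mul_add, hP.one_sub_mul_self, mul_smul_comm, hP.one_sub.eq, zero_add,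
      mul_smul_comm]
  have hK₀ : (A + C * P) * (P + t • (1 - P)) = C * P + t • A := by
    simp only [add_mul, mul_add, mul_smul_comm, mul_assoc, hAP, hAQ, hP.eq,
      hP.mul_one_sub_self, mul_zero, add_zero, add_comm]
  rw [add_mul, hK₀, smul_mul_assoc, hCQ, smul_smul, inv_mul_cancel₀ ht, one_smul, mul_sub,
    mul_one]
  abel

theorem mul_add_smul_one_sub_eq_one (hP : IsIdempotentElem P) {t : 𝕜} (ht : t ≠ 0) :
    (P + t • (1 - P)) * (P + t⁻¹ • (1 - P)) = 1 := by
  simp only [add_mul, mul_add, mul_smul_comm, smul_mul_assoc, hP.mul_one_sub_self,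
    hP.one_sub_mul_self, hP.eq, hP.one_sub.eq, smul_smul, smul_zero, add_zero, zero_add,
    inv_mul_cancel₀ ht, one_smul, add_sub_cancel]

theorem mul_add_mul_eq_smul (hP : IsIdempotentElem P) (hPA : P * A = 0) {c : 𝕜}
    (hPC : P * C = c • P) : P * (A + C * P) = c • P := by
  rw [mul_add, hPA, ← mul_assoc, hPC, smul_mul_assoc, hP.eq, zero_add]

end Factorization

theorem mul_add_one_eq_zero_of_add_one_mul_eq_zero {R : Type*} [Ring R] [StarRing R] {u p : R}
    (hu : u ∈ unitary R) (hp : IsSelfAdjoint p) (h : (u + 1) * p = 0) : p * (u + 1) = 0 := by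
  have h' : (star u + 1) * p = star u * ((u + 1) * p) := by
    rw [← mul_assoc, mul_add, Unitary.star_mul_self_of_mem hu, mul_one, add_comm]
  rw [h, mul_zero] at h'
  simpa [hp.star_eq] using congrArg star h'

namespace Matrix

section Projection

variable {𝕜 n : Type*} [RCLike 𝕜] [Fintype n] [DecidableEq n]

theorem exists_isStarProjection_range_eq_ker (A : Matrix n n 𝕜) :
    ∃ P : Matrix n n 𝕜, IsStarProjection P ∧
      LinearMap.range P.mulVecLin = LinearMap.ker A.mulVecLin := by
  let T := toEuclideanCLM (n := n) (𝕜 := 𝕜)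
  let K := LinearMap.ker (T A).toLinearMap
  let e := WithLp.linearEquiv 2 𝕜 (n → 𝕜)
  have hmulVecLin (B : Matrix n n 𝕜) :
      B.mulVecLin = e.toLinearMap ∘ₗ (T B).toLinearMap ∘ₗ e.symm.toLinearMap :=
    rfl
  refine ⟨T.symm K.starProjection, (isStarProjection_starProjection (U := K)).map T.symm, ?_⟩
  rw [hmulVecLin, hmulVecLin, StarAlgEquiv.apply_symm_apply, LinearMap.range_comp,
    LinearMap.range_comp, LinearEquiv.range, Submodule.map_top, Submodule.range_starProjection,
    LinearEquiv.ker_comp, LinearMap.ker_comp, Submodule.map_equiv_eq_comap_symm]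

theorem mul_eq_zero_of_range_le_ker {R : Type*} [CommRing R] {A P : Matrix n n R}
    (h : LinearMap.range P.mulVecLin ≤ LinearMap.ker A.mulVecLin) : A * P = 0 :=
  toLin'.injective <| by
    rw [toLin'_mul, toLin'_apply', toLin'_apply', map_zero]
    exact LinearMap.range_le_ker_iff.mp h

end Projection

section Asymptotics

variable {𝕜 n ι : Type*} [NormedField 𝕜] [Fintype n] [DecidableEq n] {A C P : Matrix n n 𝕜}
  {l : Filter ι} {t : ι → 𝕜}

theorem isUnit_add_mul_of_ker_le_range (hP : IsIdempotentElem P) (hPA : P * A = 0) {c : 𝕜}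
    (hc : c ≠ 0) (hPC : P * C = c • P)
    (hker : LinearMap.ker A.mulVecLin ≤ LinearMap.range P.mulVecLin) : IsUnit (A + C * P) := by
  rw [← mulVec_injective_iff_isUnit, ← coe_mulVecLin, ← LinearMap.ker_eq_bot,
    ker_mulVecLin_eq_bot_iff]
  intro x hx
  have hPx : P *ᵥ x = 0 := by
    have := congrArg (P *ᵥ ·) hx
    simpa [mulVec_mulVec, mul_add_mul_eq_smul hP hPA hPC, smul_mulVec, hc] using this
  have hAx : A *ᵥ x = 0 := by
    simpa [add_mulVec, ← mulVec_mulVec, hPx] using hx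
  obtain ⟨y, rfl⟩ := hker hAx
  simpa [mulVec_mulVec, hP.eq] using hPx

theorem tendsto_inv_add_smul (hP : IsIdempotentElem P) (hAP : A * P = 0)
    (hK : IsUnit (A + C * P)) (ht : Tendsto t l (cobounded 𝕜)) :
    (∀ᶠ i in l, IsUnit (C + t i • A)) ∧
      Tendsto (fun i ↦ (C + t i • A)⁻¹) l (𝓝 (P * (A + C * P)⁻¹)) := by
  let K : 𝕜 → Matrix n n 𝕜 := fun s ↦ A + C * P + s • (C * (1 - P))
  have hs : Tendsto (fun i ↦ (t i)⁻¹) l (𝓝 0) := tendsto_inv₀_cobounded.comp ht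
  have hKlim : Tendsto (fun i ↦ K (t i)⁻¹) l (𝓝 (A + C * P)) := by
    simpa using tendsto_const_nhds.add (hs.smul_const (C * (1 - P)))
  have hKunit : ∀ᶠ i in l, IsUnit (K (t i)⁻¹) := by
    have hdet := ((continuous_id.matrix_det).tendsto _).comp hKlim
    filter_upwards [hdet.eventually_ne ((isUnit_iff_isUnit_det _).mp hK).ne_zero] with i hi
    exact (isUnit_iff_isUnit_det _).mpr (isUnit_iff_ne_zero.mpr hi)
  have hinv : ∀ᶠ i in l, (C + t i • A)⁻¹ = (P + (t i)⁻¹ • (1 - P)) * (K (t i)⁻¹)⁻¹ := by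
    filter_upwards [hKunit, ht.eventually_ne_cobounded 0] with i hKi hti
    apply inv_eq_right_inv
    rw [add_smul_eq_mul_of_mul_isIdempotentElem hP hAP hti, mul_assoc,
      ← mul_assoc (P + t i • (1 - P)), mul_add_smul_one_sub_eq_one hP hti, one_mul]
    exact mul_nonsing_inv _ ((isUnit_iff_isUnit_det _).mp hKi)
  refine ⟨?_, ?_⟩
  · filter_upwards [hKunit, ht.eventually_ne_cobounded 0] with i hKi hti
    rw [add_smul_eq_mul_of_mul_isIdempotentElem hP hAP hti]
    exact hKi.mul (IsUnit.of_mul_eq_one _ (mul_add_smul_one_sub_eq_one hP hti))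
  · have hKinv : Tendsto (fun i ↦ (K (t i)⁻¹)⁻¹) l (𝓝 (A + C * P)⁻¹) := by
      refine (continuousAt_matrix_inv _ ?_).tendsto.comp hKlim
      rw [Ring.inverse_eq_inv']
      exact continuousAt_inv₀ ((isUnit_iff_isUnit_det _).mp hK).ne_zero
    have hE : Tendsto (fun i ↦ P + (t i)⁻¹ • (1 - P)) l (𝓝 P) := by
      simpa using tendsto_const_nhds.add (hs.smul_const (1 - P))
    exact (hE.mul hKinv).congr' (hinv.mono fun i hi ↦ hi.symm)

theorem tendsto_inv_add_smul_of_ker_le_range (hP : IsIdempotentElem P) (hAP : A * P = 0)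
    (hPA : P * A = 0) {c : 𝕜} (hc : c ≠ 0) (hPC : P * C = c • P)
    (hker : LinearMap.ker A.mulVecLin ≤ LinearMap.range P.mulVecLin)
    (ht : Tendsto t l (cobounded 𝕜)) :
    (∀ᶠ i in l, IsUnit (C + t i • A)) ∧ Tendsto (fun i ↦ (C + t i • A)⁻¹) l (𝓝 (c⁻¹ • P)) := by
  have hK := isUnit_add_mul_of_ker_le_range hP hPA hc hPC hker
  have hlim : P * (A + C * P)⁻¹ = c⁻¹ • P :=
    calc P * (A + C * P)⁻¹ = c⁻¹ • (P * (A + C * P)) * (A + C * P)⁻¹ := by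
          rw [mul_add_mul_eq_smul hP hPA hPC, smul_smul, inv_mul_cancel₀ hc, one_smul]
      _ = c⁻¹ • P := by
          rw [smul_mul_assoc, mul_nonsing_inv_cancel_right _ _ ((isUnit_iff_isUnit_det _).mp hK)]
  exact hlim ▸ tendsto_inv_add_smul hP hAP hK ht

end Asymptotics

end Matrix

theorem stmt4_general (d : ℕ) (U Λ : Matrix (Fin d) (Fin d) ℂ)
    (hU : U ∈ Matrix.unitaryGroup (Fin d) ℂ) :
    (∃ n₀ : ℕ, ∀ n : ℕ, n₀ ≤ n →
      IsUnit ((U - 1) + ((2 * Real.pi * n : ℝ) : ℂ) • (U + 1)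
        - Complex.I • ((U + 1) * Λ))) ∧
    ∃ P : Matrix (Fin d) (Fin d) ℂ, P.IsHermitian ∧ P * P = P ∧
      LinearMap.range P.mulVecLin = LinearMap.ker (U + 1).mulVecLin ∧
      Tendsto (fun n : ℕ =>
          -((U - 1) + ((2 * Real.pi * n : ℝ) : ℂ) • (U + 1)
              - Complex.I • ((U + 1) * Λ))⁻¹
            * ((U - 1) - ((2 * Real.pi * n : ℝ) : ℂ) • (U + 1)
              + Complex.I • ((U + 1) * Λ)))
        atTop (nhds (1 - (2 : ℂ) • P)) := by
  obtain ⟨P, hP, hrange⟩ := (U + 1).exists_isStarProjection_range_eq_ker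
  have hAP : (U + 1) * P = 0 := mul_eq_zero_of_range_le_ker hrange.le
  have hPA : P * (U + 1) = 0 :=
    mul_add_one_eq_zero_of_add_one_mul_eq_zero hU hP.isSelfAdjoint hAP
  have hPB : P * (U - 1) = (-2 : ℂ) • P := by
    rw [mul_sub, mul_one, ← sub_eq_zero, ← hPA, mul_add, mul_one]
    module
  have hPC : P * (U - 1 - Complex.I • ((U + 1) * Λ)) = (-2 : ℂ) • P := by
    rw [mul_sub, hPB, mul_smul_comm, ← mul_assoc, hPA, zero_mul, smul_zero, sub_zero]
  have hM (x : ℂ) : U - 1 + x • (U + 1) - Complex.I • ((U + 1) * Λ) =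
      U - 1 - Complex.I • ((U + 1) * Λ) + x • (U + 1) := by
    abel
  have hN (x : ℂ) : U - 1 - x • (U + 1) + Complex.I • ((U + 1) * Λ) =
      (2 : ℂ) • (U - 1) - (U - 1 - Complex.I • ((U + 1) * Λ) + x • (U + 1)) := by
    module
  simp only [hM, hN]
  set C := U - 1 - Complex.I • ((U + 1) * Λ)
  have ht : Tendsto (fun n : ℕ ↦ ((2 * Real.pi * n : ℝ) : ℂ)) atTop (cobounded ℂ) :=
    (RCLike.tendsto_ofReal_atTop_cobounded ℂ).comp
      (tendsto_natCast_atTop_atTop.const_mul_atTop (by positivity))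
  obtain ⟨hunit, hlim⟩ := tendsto_inv_add_smul_of_ker_le_range hP.isIdempotentElem hAP hPA
    (by norm_num) hPC hrange.ge ht
  refine ⟨eventually_atTop.mp hunit, P, hP.isSelfAdjoint, hP.isIdempotentElem.eq, hrange, ?_⟩
  have hPlim : (-2 : ℂ)⁻¹ • P * (U - 1) = P := by
    rw [smul_mul_assoc, hPB, smul_smul, inv_mul_cancel₀ (by norm_num), one_smul]
  have hσlim := tendsto_const_nhds (x := (1 : Matrix (Fin d) (Fin d) ℂ)).sub
    ((hPlim ▸ hlim.mul_const (U - 1)).const_smul (2 : ℂ))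
  refine hσlim.congr' ?_
  filter_upwards [hunit] with n hn
  rw [neg_mul, mul_sub _ ((2 : ℂ) • (U - 1)),
    nonsing_inv_mul _ ((isUnit_iff_isUnit_det _).mp hn), mul_smul_comm]
  abel

/-- Proposition 5.2 (vertex scattering matrix behaviour): for a unitary coupling
matrix `U` and a diagonal matrix `Λ`, the matrices
`M_n = (U − I) + 2πn(U + I) − i(U + I)Λ` are invertible for large `n`, and the
scattering matrices `σ_n = −M_n⁻¹((U − I) − 2πn(U + I) + i(U + I)Λ)` converge to
`I − 2P`, where `P` is the orthogonal projection onto `ker(U + I)`, the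
eigenspace of `U` for the eigenvalue `−1`. -/
theorem stmt4 (d : ℕ) (hd : 1 ≤ d) (U Λ : Matrix (Fin d) (Fin d) ℂ)
    (hU : U ∈ Matrix.unitaryGroup (Fin d) ℂ) (hΛ : Λ.IsDiag) :
    (∃ n₀ : ℕ, ∀ n : ℕ, n₀ ≤ n →
      IsUnit ((U - 1) + ((2 * Real.pi * n : ℝ) : ℂ) • (U + 1)
        - Complex.I • ((U + 1) * Λ))) ∧
    ∃ P : Matrix (Fin d) (Fin d) ℂ, P.IsHermitian ∧ P * P = P ∧
      LinearMap.range P.mulVecLin = LinearMap.ker (U + 1).mulVecLin ∧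
      Tendsto (fun n : ℕ =>
          -((U - 1) + ((2 * Real.pi * n : ℝ) : ℂ) • (U + 1)
              - Complex.I • ((U + 1) * Λ))⁻¹
            * ((U - 1) - ((2 * Real.pi * n : ℝ) : ℂ) • (U + 1)
              + Complex.I • ((U + 1) * Λ)))
        atTop (nhds (1 - (2 : ℂ) • P)) :=
  stmt4_general d U Λ hU
end

section
/- Let K ≥ 1, let c : {1,…,K} → ℂ, let C > 0 and n₀ ≥ 1, and suppose λ : {1,…,K} × {n₀, n₀+1, …} → ℂ satisfies |λ(s,n) − (2πin + c(s))| ≤ C/n for all s and all n ≥ n₀. For R > 0 set N(R) = #{(s,n) : n ≥ n₀, |Im λ(s,n)| < R} and, for an open interval I ⊆ ℝ, N_I(R) = #{(s,n) : n ≥ n₀, |Im λ(s,n)| < R, Re λ(s,n) ∈ I}. Let c₀ ∈ ℝ and ε > 0 be such that Re c(s) ≠ c₀ − ε and Re c(s) ≠ c₀ + ε for every s, and let m = #{s : c₀ − ε < Re c(s) < c₀ + ε}. Then lim_{R→∞} N_I(R)/N(R) = m/K for I = (c₀ − ε, c₀ + ε). -/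
/-! Along the `s`-th sequence `Im λ(s,n) = 2πn + O(1)`, so `#{n ≥ n₀ : |Im λ(s,n)| < R}` is
`R/(2π) + O(1)`. Moreover `Re λ(s,n) → Re c(s)`, which is not an endpoint of `I`, so for large `n`
the condition `Re λ(s,n) ∈ I` holds exactly when `Re c(s) ∈ I`; the sequences with `Re c(s) ∉ I`
then contribute only `O(1)` to `N_I(R)`. Hence `N_I(R) = m R/(2π) + O(1)` and `N(R) = K R/(2π) + O(1)`. -/

open Filter Real Set Topology

theorem Filter.Tendsto.eventually_mem_iff_of_notMem_frontier {α X : Type*} [TopologicalSpace X]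
    {l : Filter α} {u : α → X} {x : X} {s : Set X} (hu : Tendsto u l (𝓝 x))
    (hx : x ∉ frontier s) : ∀ᶠ a in l, u a ∈ s ↔ x ∈ s := by
  rw [← mem_compl_iff, compl_frontier_eq_union_interior] at hx
  rcases hx with hx | hx
  · filter_upwards [hu (mem_interior_iff_mem_nhds.mp hx)] with a ha
    exact iff_of_true ha (interior_subset hx)
  · filter_upwards [hu (mem_interior_iff_mem_nhds.mp hx)] with a ha
    exact iff_of_false ha (interior_subset hx)

theorem ncard_setOf_prod_eq_sum {ι α : Type*} [Fintype ι] (Q : ι → α → Prop)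
    (hQ : ∀ i, {a | Q i a}.Finite) :
    {x : ι × α | Q x.1 x.2}.ncard = ∑ i, {a | Q i a}.ncard := by
  have (i : ι) : Finite {a // Q i a} := (hQ i).to_subtype
  rw [← Nat.card_coe_set_eq]
  exact (Nat.card_congr (Equiv.subtypeProdEquivSigmaSubtype Q)).trans Nat.card_sigma

theorem tendsto_div_id_of_abs_sub_mul_le {g : ℝ → ℝ} {α D : ℝ}
    (h : ∀ᶠ R in atTop, |g R - α * R| ≤ D) :
    Tendsto (fun R => g R / R) atTop (𝓝 α) := by
  have hsub : Tendsto (fun R => g R / R - α) atTop (𝓝 0) := by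
    refine squeeze_zero_norm' (a := fun R => D / R) ?_ (tendsto_const_nhds.div_atTop tendsto_id)
    filter_upwards [h, eventually_gt_atTop 0] with R hR hR0
    rw [Real.norm_eq_abs, div_sub' hR0.ne', abs_div, abs_of_pos hR0, mul_comm]
    exact div_le_div_of_nonneg_right hR hR0.le
  simpa using hsub.add_const α

theorem tendsto_div_of_tendsto_div_id {g h : ℝ → ℝ} {α β : ℝ}
    (hg : Tendsto (fun R => g R / R) atTop (𝓝 α)) (hh : Tendsto (fun R => h R / R) atTop (𝓝 β))
    (hβ : β ≠ 0) : Tendsto (fun R => g R / h R) atTop (𝓝 (α / β)) := by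
  refine (hg.div hh hβ).congr' ?_
  filter_upwards [eventually_gt_atTop 0] with R hR
  exact div_div_div_cancel_right₀ hR.ne' _ _

section Counting

variable {f : ℕ → ℝ} {a B : ℝ} {p : ℕ → Prop} {N : ℕ}

theorem setOf_abs_lt_subset_Iio (ha : 0 < a) (hf : ∀ n, N ≤ n → |f n - a * n| ≤ B) (R : ℝ) :
    {n | p n ∧ |f n| < R} ⊆ Iio (N + ⌈(R + B) / a⌉₊) := by
  rintro n ⟨-, hn⟩
  by_cases hN : N ≤ n
  · have hlt : (n : ℝ) < (R + B) / a := by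
      rw [lt_div_iff₀' ha]
      linarith [(abs_le.mp (hf n hN)).1, le_abs_self (f n)]
    exact (Nat.lt_ceil.mpr hlt).trans_le (Nat.le_add_left _ _)
  · exact (not_le.mp hN).trans_le (Nat.le_add_right _ _)

theorem Ico_subset_setOf_abs_lt (ha : 0 < a) (hf : ∀ n, N ≤ n → |f n - a * n| ≤ B ∧ p n)
    {R : ℝ} (hR : B < R) : Ico N ⌈(R - B) / a⌉₊ ⊆ {n | p n ∧ |f n| < R} := by
  rintro n ⟨hNn, hn⟩
  obtain ⟨hfn, hpn⟩ := hf n hNn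
  have hlt : a * n < R - B := by
    rw [← lt_div_iff₀' ha]
    exact Nat.lt_ceil.mp hn
  have : 0 ≤ a * n := by positivity
  refine ⟨hpn, abs_lt.mpr ⟨?_, ?_⟩⟩ <;> linarith [abs_le.mp hfn]

theorem finite_setOf_abs_lt (ha : 0 < a)
    (hf : IsBoundedUnder (· ≤ ·) atTop fun n => |f n - a * n|) (R : ℝ) :
    {n | p n ∧ |f n| < R}.Finite := by
  obtain ⟨B, hB⟩ := hf
  obtain ⟨N, hN⟩ := eventually_atTop.mp (eventually_map.mp hB)
  exact (finite_Iio _).subset (setOf_abs_lt_subset_Iio ha hN R)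

theorem tendsto_ncard_setOf_abs_lt_div_id (ha : 0 < a)
    (hf : IsBoundedUnder (· ≤ ·) atTop fun n => |f n - a * n|) (hp : ∀ᶠ n in atTop, p n) :
    Tendsto (fun R => ({n | p n ∧ |f n| < R}.ncard : ℝ) / R) atTop (𝓝 a⁻¹) := by
  obtain ⟨B, hB⟩ := hf
  obtain ⟨N, hN⟩ := eventually_atTop.mp ((eventually_map.mp hB).and hp)
  refine tendsto_div_id_of_abs_sub_mul_le (D := N + |B| / a + 1) ?_
  filter_upwards [eventually_gt_atTop |B|] with R hR
  have hupper : ({n | p n ∧ |f n| < R}.ncard : ℝ) ≤ N + ⌈(R + B) / a⌉₊ := by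
    exact_mod_cast (ncard_le_ncard (setOf_abs_lt_subset_Iio ha (fun n hn => (hN n hn).1) R)
      (finite_Iio _)).trans_eq (ncard_Iio_nat _)
  have hlower : (⌈(R - B) / a⌉₊ : ℝ) ≤ {n | p n ∧ |f n| < R}.ncard + N := by
    have := ncard_le_ncard (Ico_subset_setOf_abs_lt ha hN ((le_abs_self B).trans_lt hR))
      ((finite_Iio _).subset (setOf_abs_lt_subset_Iio ha (fun n hn => (hN n hn).1) R))
    rw [ncard_Ico_nat] at this
    exact_mod_cast (by omega : ⌈(R - B) / a⌉₊ ≤ _)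
  have hceil : (⌈(R + B) / a⌉₊ : ℝ) < (R + B) / a + 1 :=
    Nat.ceil_lt_add_one (div_nonneg (by linarith [neg_abs_le B]) ha.le)
  have hB_le : |B / a| ≤ |B| / a := by rw [abs_div, abs_of_pos ha]
  have hceil' := Nat.le_ceil ((R - B) / a)
  rw [abs_le, inv_mul_eq_div]
  constructor <;> linarith [abs_le.mp hB_le, add_div R B a, sub_div R B a]

theorem tendsto_ncard_setOf_abs_lt_div_id_of_eventually_not (hp : ∀ᶠ n in atTop, ¬ p n) :
    Tendsto (fun R => ({n | p n ∧ |f n| < R}.ncard : ℝ) / R) atTop (𝓝 0) := by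
  obtain ⟨N, hN⟩ := eventually_atTop.mp hp
  refine tendsto_div_id_of_abs_sub_mul_le (D := N) (Eventually.of_forall fun R => ?_)
  have hsub : {n | p n ∧ |f n| < R} ⊆ Iio N := fun n hn => not_le.mp fun h => hN n h hn.1
  rw [zero_mul, sub_zero, abs_of_nonneg (Nat.cast_nonneg _)]
  exact_mod_cast (ncard_le_ncard hsub (finite_Iio _)).trans_eq (ncard_Iio_nat _)

theorem tendsto_ncard_setOf_abs_lt_div_id_ite {q : Prop} [Decidable q] (ha : 0 < a)
    (hf : IsBoundedUnder (· ≤ ·) atTop fun n => |f n - a * n|) (hp : ∀ᶠ n in atTop, p n ↔ q) :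
    Tendsto (fun R => ({n | p n ∧ |f n| < R}.ncard : ℝ) / R) atTop
      (𝓝 (if q then a⁻¹ else 0)) := by
  by_cases hq : q
  · simp only [hq, iff_true] at hp
    rw [if_pos hq]
    exact tendsto_ncard_setOf_abs_lt_div_id ha hf hp
  · simp only [hq, iff_false] at hp
    rw [if_neg hq]
    exact tendsto_ncard_setOf_abs_lt_div_id_of_eventually_not hp

end Counting

theorem tendsto_ncard_prod_setOf_abs_lt_div_id {ι : Type*} [Fintype ι] {f : ι → ℕ → ℝ}
    {p : ι → ℕ → Prop} {q : ι → Prop} {a : ℝ} (ha : 0 < a)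
    (hf : ∀ i, IsBoundedUnder (· ≤ ·) atTop fun n => |f i n - a * n|)
    (hp : ∀ i, ∀ᶠ n in atTop, p i n ↔ q i) :
    Tendsto (fun R => ({x : ι × ℕ | p x.1 x.2 ∧ |f x.1 x.2| < R}.ncard : ℝ) / R) atTop
      (𝓝 ({i | q i}.ncard * a⁻¹)) := by
  classical
  have hsum := tendsto_finsetSum Finset.univ fun i _ =>
    tendsto_ncard_setOf_abs_lt_div_id_ite ha (hf i) (hp i)
  have hlim : ∑ i, (if q i then a⁻¹ else 0) = {i | q i}.ncard * a⁻¹ := by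
    rw [← Finset.sum_filter, Finset.sum_const, nsmul_eq_mul, ncard_eq_toFinset_card',
      toFinset_ofPred]
  rw [hlim] at hsum
  refine hsum.congr fun R => ?_
  rw [ncard_setOf_prod_eq_sum _ fun i => finite_setOf_abs_lt ha (hf i) R, Nat.cast_sum,
    Finset.sum_div]

theorem tendsto_sub_of_norm_sub_le_div {E : Type*} [SeminormedAddGroup E] {u v : ℕ → E} {C : ℝ}
    {n₀ : ℕ} (h : ∀ n, n₀ ≤ n → ‖u n - v n‖ ≤ C / n) :
    Tendsto (fun n => u n - v n) atTop (𝓝 0) :=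
  squeeze_zero_norm' (eventually_atTop.mpr ⟨n₀, h⟩)
    (tendsto_const_nhds.div_atTop tendsto_natCast_atTop_atTop)

theorem tendsto_re_and_im_sub_mul {z : ℕ → ℂ} {w : ℂ} {ω : ℝ}
    (h : Tendsto (fun n => z n - (((ω * n : ℝ) : ℂ) * Complex.I + w)) atTop (𝓝 0)) :
    Tendsto (fun n => (z n).re) atTop (𝓝 w.re) ∧
      Tendsto (fun n => (z n).im - ω * n) atTop (𝓝 w.im) := by
  constructor
  · simpa using ((Complex.continuous_re.tendsto 0).comp h).add_const w.re
  · have him := ((Complex.continuous_im.tendsto 0).comp h).add_const w.im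
    rw [Complex.zero_im, zero_add] at him
    refine him.congr fun n => ?_
    simp only [Function.comp_apply, Complex.sub_im, Complex.add_im, Complex.mul_im,
      Complex.ofReal_re, Complex.ofReal_im, Complex.I_re, Complex.I_im]
    ring

theorem stmt7_general (K : ℕ) (hK : 1 ≤ K) (c : Fin K → ℂ) (C : ℝ)
    (n₀ : ℕ) (lam : Fin K → ℕ → ℂ)
    (hlam : ∀ s : Fin K, ∀ n : ℕ, n₀ ≤ n →
      ‖lam s n - (((2 * π * n : ℝ) : ℂ) * Complex.I + c s)‖ ≤ C / n)
    (c₀ ε : ℝ) (hε : 0 < ε)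
    (hne : ∀ s : Fin K, (c s).re ≠ c₀ - ε ∧ (c s).re ≠ c₀ + ε) :
    Tendsto (fun R : ℝ =>
        (({p : Fin K × ℕ | n₀ ≤ p.2 ∧ |(lam p.1 p.2).im| < R
            ∧ (lam p.1 p.2).re ∈ Set.Ioo (c₀ - ε) (c₀ + ε)}.ncard : ℝ))
        / ({p : Fin K × ℕ | n₀ ≤ p.2 ∧ |(lam p.1 p.2).im| < R}.ncard : ℝ))
      atTop
      (nhds (({s : Fin K | (c s).re ∈ Set.Ioo (c₀ - ε) (c₀ + ε)}.ncard : ℝ) / K)) := by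
  have hlim (s : Fin K) := tendsto_re_and_im_sub_mul (tendsto_sub_of_norm_sub_le_div (hlam s))
  have hbdd (s : Fin K) : IsBoundedUnder (· ≤ ·) atTop fun n => |(lam s n).im - 2 * π * n| :=
    (hlim s).2.abs.isBoundedUnder_le
  have hre (s : Fin K) : ∀ᶠ n in atTop, (n₀ ≤ n ∧ (lam s n).re ∈ Ioo (c₀ - ε) (c₀ + ε)) ↔
      (c s).re ∈ Ioo (c₀ - ε) (c₀ + ε) := by
    have hfr : (c s).re ∉ frontier (Ioo (c₀ - ε) (c₀ + ε)) := by
      rw [frontier_Ioo (by linarith)]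
      simpa using hne s
    filter_upwards [eventually_ge_atTop n₀,
      (hlim s).1.eventually_mem_iff_of_notMem_frontier hfr] with n hn hiff
    exact (and_iff_right hn).trans hiff
  have hall := tendsto_ncard_prod_setOf_abs_lt_div_id (q := fun _ => True) two_pi_pos hbdd
    fun _ => (eventually_ge_atTop n₀).mono fun _ hn => iff_of_true hn trivial
  have hin := tendsto_ncard_prod_setOf_abs_lt_div_id two_pi_pos hbdd hre
  simp only [and_right_comm, and_assoc] at hin
  rw [ofPred_true, ncard_univ, Nat.card_eq_fintype_card, Fintype.card_fin] at hall
  have hK' : (K : ℝ) * (2 * π)⁻¹ ≠ 0 := by positivity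
  have hratio := tendsto_div_of_tendsto_div_id hin hall hK'
  rwa [mul_div_mul_right _ _ (inv_ne_zero two_pi_pos.ne')] at hratio

/-- The counting argument of Theorem 6.7(ii): if the eigenvalues split into `K`
sequences `λ(s,n) = 2πin + c(s) + O(1/n)`, then the asymptotic proportion of
eigenvalues with real part in the interval `(c₀ − ε, c₀ + ε)` (whose endpoints
avoid all `Re c(s)`) equals `m/K`, where `m` is the number of sequences whose
constant term has real part in that interval. -/
theorem stmt7 (K : ℕ) (hK : 1 ≤ K) (c : Fin K → ℂ) (C : ℝ) (hC : 0 < C)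
    (n₀ : ℕ) (hn₀ : 1 ≤ n₀) (lam : Fin K → ℕ → ℂ)
    (hlam : ∀ s : Fin K, ∀ n : ℕ, n₀ ≤ n →
      ‖lam s n - (((2 * π * n : ℝ) : ℂ) * Complex.I + c s)‖ ≤ C / n)
    (c₀ ε : ℝ) (hε : 0 < ε)
    (hne : ∀ s : Fin K, (c s).re ≠ c₀ - ε ∧ (c s).re ≠ c₀ + ε) :
    Tendsto (fun R : ℝ =>
        (({p : Fin K × ℕ | n₀ ≤ p.2 ∧ |(lam p.1 p.2).im| < R
            ∧ (lam p.1 p.2).re ∈ Set.Ioo (c₀ - ε) (c₀ + ε)}.ncard : ℝ))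
        / ({p : Fin K × ℕ | n₀ ≤ p.2 ∧ |(lam p.1 p.2).im| < R}.ncard : ℝ))
      atTop
      (nhds (({s : Fin K | (c s).re ∈ Set.Ioo (c₀ - ε) (c₀ + ε)}.ncard : ℝ) / K)) :=
  stmt7_general K hK c C n₀ lam hlam c₀ ε hε hne
end

section
/- Let a : [0,1] → ℝ be continuously differentiable and b : [0,1] → ℝ be continuous. Then there exist constants C > 0 and R > 0 such that for every λ ∈ ℂ with Im λ ≥ R there exist twice continuously differentiable functions u₊, u₋ : [0,1] → ℂ satisfying u_±''(x) = (λ² + 2λ a(x) − b(x)) u_±(x) for all x ∈ [0,1], u_±(0) = 1, and |u_±(x) · exp(∓λx ∓ ∫_0^x a(t) dt) − 1| ≤ C/|λ| for all x ∈ [0,1]. -/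
/-!
Write `u = exp (μ x + ∫₀ˣ a) · w`. Then `u'' = (μ² + 2μa - b) u` becomes
`w'' + 2 (μ + a) w' + q w = 0` with `q = a' + a² + b`, i.e. `w = 1 - T (q w)`, where
`T ψ (x) = ∫₀ˣ m` and `m` solves `m' = -2 (μ + a) m + ψ`. Solving for `m` by variation of
constants from the endpoint `c` of `[0,1]` where `|exp (2 μ t)|` is smallest keeps `m` bounded by
`‖ψ‖` uniformly in `μ`; integrating the equation for `m` then gives
`2 μ ∫₀ˣ m = m 0 - m x + ∫₀ˣ (ψ - 2 a m)`, so `‖T‖ = O(1/|μ|)`. For `|μ|` large,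
`ψ ↦ q (1 - T ψ)` is a contraction of `C([0,1])`, and its fixed point gives
`w = 1 - T ψ = 1 + O(1/μ)`. The solution `u₋` is `u₊` for the data `(-λ, -a)`.
-/

open MeasureTheory intervalIntegral Set

noncomputable def duhamel (θ ψ : ℝ → ℂ) (c s : ℝ) : ℂ :=
  Complex.exp (-θ s) * ∫ t in c..s, Complex.exp (θ t) * ψ t

section Duhamel

variable {θ θ' ψ : ℝ → ℂ} {c : ℝ}

@[fun_prop]
lemma continuous_duhamel (hθ : Continuous θ) (hψ : Continuous ψ) :
    Continuous (duhamel θ ψ c) := by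
  have hint : Continuous fun t => Complex.exp (θ t) * ψ t := by fun_prop
  exact (Complex.continuous_exp.comp hθ.neg).mul
    (continuous_primitive (μ := volume) (fun _ _ => hint.intervalIntegrable _ _) c)

lemma hasDerivAt_duhamel (hθ : ∀ t, HasDerivAt θ (θ' t) t) (hψ : Continuous ψ) (s : ℝ) :
    HasDerivAt (duhamel θ ψ c) (-θ' s * duhamel θ ψ c s + ψ s) s := by
  have hθc : Continuous θ := continuous_iff_continuousAt.2 fun t => (hθ t).continuousAt
  have hint : Continuous fun t => Complex.exp (θ t) * ψ t := by fun_prop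
  refine ((hθ s).neg.cexp.mul (hint.integral_hasStrictDerivAt c s).hasDerivAt).congr_deriv ?_
  simp only [duhamel, Pi.neg_apply, Complex.exp_neg]
  field_simp [Complex.exp_ne_zero]

lemma duhamel_sub (hθ : Continuous θ) {ψ₁ ψ₂ : ℝ → ℂ} (h₁ : Continuous ψ₁) (h₂ : Continuous ψ₂)
    (s : ℝ) : duhamel θ (ψ₁ - ψ₂) c s = duhamel θ ψ₁ c s - duhamel θ ψ₂ c s := by
  simp only [duhamel, Pi.sub_apply, mul_sub]
  rw [intervalIntegral.integral_sub ((by fun_prop : Continuous _).intervalIntegrable _ _)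
    ((by fun_prop : Continuous _).intervalIntegrable _ _), mul_sub]

lemma norm_duhamel_le {s L P : ℝ} (hL : ∀ t ∈ uIcc c s, (θ t - θ s).re ≤ L)
    (hP : ∀ t ∈ uIcc c s, ‖ψ t‖ ≤ P) :
    ‖duhamel θ ψ c s‖ ≤ Real.exp L * P * |s - c| := by
  rw [duhamel, ← intervalIntegral.integral_const_mul]
  refine norm_integral_le_of_norm_le_const fun t ht => ?_
  have ht := uIoc_subset_uIcc ht
  rw [← mul_assoc, ← Complex.exp_add, norm_mul, Complex.norm_exp, neg_add_eq_sub]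
  exact mul_le_mul (Real.exp_le_exp.2 (hL t ht)) (hP t ht) (norm_nonneg _) (Real.exp_pos _).le

end Duhamel

lemma integral_eq_of_hasDerivAt_eq_mul_add {m g : ℝ → ℂ} {κ : ℂ} (hκ : κ ≠ 0)
    (hm : ∀ s, HasDerivAt m (κ * m s + g s) s) (hg : Continuous g) (a b : ℝ) :
    ∫ s in a..b, m s = (m b - m a - ∫ s in a..b, g s) / κ := by
  have hmc : Continuous m := continuous_iff_continuousAt.2 fun s => (hm s).continuousAt
  have hftc := integral_eq_sub_of_hasDerivAt (fun s _ => hm s)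
    ((hmc.const_mul κ |>.add hg).intervalIntegrable a b)
  rw [intervalIntegral.integral_add ((hmc.intervalIntegrable a b).const_mul κ)
    (hg.intervalIntegrable a b), intervalIntegral.integral_const_mul] at hftc
  rw [eq_div_iff hκ, ← hftc]
  ring

noncomputable def phase (a : ℝ → ℝ) (μ : ℂ) (x : ℝ) : ℂ :=
  μ * x + ((∫ t in (0:ℝ)..x, a t : ℝ) : ℂ)

noncomputable def volterra (a : ℝ → ℝ) (μ : ℂ) (c : ℝ) (ψ : ℝ → ℂ) (x : ℝ) : ℂ :=
  ∫ s in (0:ℝ)..x, duhamel (fun t => 2 * phase a μ t) ψ c s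

section Volterra

variable {a : ℝ → ℝ} {μ : ℂ} {c : ℝ} {ψ : ℝ → ℂ}

lemma hasDerivAt_phase (ha : Continuous a) (μ : ℂ) (x : ℝ) :
    HasDerivAt (phase a μ) (μ + a x) x := by
  have hlin : HasDerivAt (fun y : ℝ => μ * (y : ℂ)) μ x := by
    simpa using (hasDerivAt_id x).ofReal_comp.const_mul μ
  exact hlin.add (ha.integral_hasStrictDerivAt 0 x).hasDerivAt.ofReal_comp

@[fun_prop]
lemma continuous_phase (ha : Continuous a) (μ : ℂ) : Continuous (phase a μ) :=
  continuous_iff_continuousAt.2 fun x => (hasDerivAt_phase ha μ x).continuousAt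

lemma phase_zero (a : ℝ → ℝ) (μ : ℂ) : phase a μ 0 = 0 := by
  simp [phase]

lemma phase_neg (a : ℝ → ℝ) (μ : ℂ) (x : ℝ) : phase (fun t => -a t) (-μ) x = -phase a μ x := by
  simp only [phase, intervalIntegral.integral_neg, Complex.ofReal_neg]
  ring

lemma phase_congr {a' : ℝ → ℝ} (h : EqOn a a' (Icc 0 1)) (μ : ℂ) {x : ℝ}
    (hx : x ∈ Icc (0:ℝ) 1) : phase a μ x = phase a' μ x := by
  rw [phase, phase, integral_congr (h.mono (uIcc_subset_Icc (left_mem_Icc.2 zero_le_one) hx))]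

lemma hasDerivAt_duhamel_phase (ha : Continuous a) (hψ : Continuous ψ) (s : ℝ) :
    HasDerivAt (duhamel (fun t => 2 * phase a μ t) ψ c)
      (-(2 * μ) * duhamel (fun t => 2 * phase a μ t) ψ c s
        + (ψ s - 2 * a s * duhamel (fun t => 2 * phase a μ t) ψ c s)) s :=
  (hasDerivAt_duhamel (fun t => (hasDerivAt_phase ha μ t).const_mul 2) hψ s).congr_deriv
    (by ring)

lemma hasDerivAt_volterra (ha : Continuous a) (hψ : Continuous ψ) (x : ℝ) :
    HasDerivAt (volterra a μ c ψ) (duhamel (fun t => 2 * phase a μ t) ψ c x) x :=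
  ((by fun_prop : Continuous (duhamel (fun t => 2 * phase a μ t) ψ c)).integral_hasStrictDerivAt
    0 x).hasDerivAt

lemma continuous_volterra (ha : Continuous a) (hψ : Continuous ψ) :
    Continuous (volterra a μ c ψ) :=
  continuous_iff_continuousAt.2 fun x => (hasDerivAt_volterra ha hψ x).continuousAt

lemma volterra_sub (ha : Continuous a) {ψ₁ ψ₂ : ℝ → ℂ} (h₁ : Continuous ψ₁)
    (h₂ : Continuous ψ₂) :
    volterra a μ c (ψ₁ - ψ₂) = volterra a μ c ψ₁ - volterra a μ c ψ₂ := by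
  have hθ : Continuous fun t => 2 * phase a μ t := by fun_prop
  ext x
  simp only [volterra, Pi.sub_apply, duhamel_sub hθ h₁ h₂]
  exact intervalIntegral.integral_sub ((continuous_duhamel hθ h₁).intervalIntegrable _ _)
    ((continuous_duhamel hθ h₂).intervalIntegrable _ _)

variable {Ma MA P : ℝ} (hMa : ∀ t ∈ Icc (0:ℝ) 1, |a t| ≤ Ma)
  (hMA : ∀ t ∈ Icc (0:ℝ) 1, |∫ r in (0:ℝ)..t, a r| ≤ MA) (hP : ∀ t ∈ Icc (0:ℝ) 1, ‖ψ t‖ ≤ P)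
  (hc : c ∈ Icc (0:ℝ) 1) (hμc : ∀ s ∈ Icc (0:ℝ) 1, ∀ t ∈ uIcc c s, μ.re * (t - s) ≤ 0)
include hMA hP hc hμc

lemma norm_duhamel_phase_le {s : ℝ} (hs : s ∈ Icc (0:ℝ) 1) :
    ‖duhamel (fun t => 2 * phase a μ t) ψ c s‖ ≤ Real.exp (4 * MA) * P := by
  have hP0 : 0 ≤ P := (norm_nonneg _).trans (hP 0 (left_mem_Icc.2 zero_le_one))
  have hsub : uIcc c s ⊆ Icc 0 1 := uIcc_subset_Icc hc hs
  have hdecay : ∀ t ∈ uIcc c s, (2 * phase a μ t - 2 * phase a μ s).re ≤ 4 * MA := by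
    intro t ht
    have hre : (2 * phase a μ t - 2 * phase a μ s).re = 2 * (μ.re * (t - s))
        + 2 * ((∫ r in (0:ℝ)..t, a r) - ∫ r in (0:ℝ)..s, a r) := by
      simp only [phase, Complex.sub_re, Complex.mul_re, Complex.add_re, Complex.ofReal_re,
        Complex.ofReal_im, Complex.re_ofNat, Complex.im_ofNat, Complex.add_im, Complex.mul_im]
      ring
    rw [hre]
    linarith [hμc s hs t ht, abs_le.1 (hMA t (hsub ht)), abs_le.1 (hMA s hs)]
  have hsc : |s - c| ≤ 1 := abs_sub_le_iff.2 ⟨by linarith [hs.2, hc.1], by linarith [hs.1, hc.2]⟩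
  calc ‖duhamel (fun t => 2 * phase a μ t) ψ c s‖
      ≤ Real.exp (4 * MA) * P * |s - c| := norm_duhamel_le hdecay fun t ht => hP t (hsub ht)
    _ ≤ Real.exp (4 * MA) * P := mul_le_of_le_one_right (by positivity) hsc

include hMa

lemma norm_volterra_le (ha : Continuous a) (hψ : Continuous ψ) (hμ : μ ≠ 0) {x : ℝ}
    (hx : x ∈ Icc (0:ℝ) 1) :
    ‖volterra a μ c ψ x‖ ≤ ((1 + Ma) * Real.exp (4 * MA) + 1) * P / ‖μ‖ := by
  set m := duhamel (fun t => 2 * phase a μ t) ψ c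
  set M := Real.exp (4 * MA) * P
  have hm : ∀ s ∈ Icc (0:ℝ) 1, ‖m s‖ ≤ M := fun s hs => norm_duhamel_phase_le hMA hP hc hμc hs
  have hMa0 : 0 ≤ Ma := (abs_nonneg _).trans (hMa 0 (left_mem_Icc.2 zero_le_one))
  have hP0 : 0 ≤ P := (norm_nonneg _).trans (hP 0 (left_mem_Icc.2 zero_le_one))
  have hg : ∀ s ∈ uIoc (0:ℝ) x, ‖ψ s - 2 * a s * m s‖ ≤ P + 2 * Ma * M := by
    intro s hs
    rw [uIoc_of_le hx.1] at hs
    have hs : s ∈ Icc (0:ℝ) 1 := ⟨hs.1.le, hs.2.trans hx.2⟩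
    calc ‖ψ s - 2 * a s * m s‖ ≤ ‖ψ s‖ + 2 * |a s| * ‖m s‖ := by
          refine (norm_sub_le _ _).trans_eq ?_
          simp [Complex.norm_real]
      _ ≤ P + 2 * Ma * M := by
          gcongr
          exacts [hP s hs, hMa s hs, hm s hs]
  have hint : ‖∫ s in (0:ℝ)..x, (ψ s - 2 * a s * m s)‖ ≤ P + 2 * Ma * M := by
    refine (norm_integral_le_of_norm_le_const hg).trans
      (mul_le_of_le_one_right (by positivity) ?_)
    rw [sub_zero, abs_of_nonneg hx.1]
    exact hx.2
  rw [volterra, integral_eq_of_hasDerivAt_eq_mul_add (neg_ne_zero.2 (mul_ne_zero two_ne_zero hμ))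
    (hasDerivAt_duhamel_phase ha hψ) (by fun_prop), norm_div, norm_neg, norm_mul,
    Complex.norm_two]
  have hμ0 : 0 < ‖μ‖ := norm_pos_iff.2 hμ
  calc ‖m x - m 0 - ∫ s in (0:ℝ)..x, (ψ s - 2 * a s * m s)‖ / (2 * ‖μ‖)
      ≤ (M + M + (P + 2 * Ma * M)) / (2 * ‖μ‖) := by
        gcongr
        refine (norm_sub_le _ _).trans (add_le_add ((norm_sub_le _ _).trans ?_) hint)
        exact add_le_add (hm x hx) (hm 0 (left_mem_Icc.2 zero_le_one))
    _ = ((1 + Ma) * Real.exp (4 * MA) + 1 / 2) * P / ‖μ‖ := by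
        field_simp
        ring
    _ ≤ ((1 + Ma) * Real.exp (4 * MA) + 1) * P / ‖μ‖ := by
        gcongr
        norm_num

end Volterra

/-- An endpoint from which `t ↦ Re (μ t)` increases towards every `s ∈ [0, 1]`: started there,
the kernel `exp (2 μ (t - s))` of `duhamel` stays bounded by `1`. -/
lemma exists_basePoint (μ : ℂ) :
    ∃ c ∈ Icc (0:ℝ) 1, ∀ s ∈ Icc (0:ℝ) 1, ∀ t ∈ uIcc c s, μ.re * (t - s) ≤ 0 := by
  rcases le_or_gt 0 μ.re with hμ | hμ
  · refine ⟨0, left_mem_Icc.2 zero_le_one, fun s hs t ht => ?_⟩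
    rw [uIcc_of_le hs.1] at ht
    exact mul_nonpos_of_nonneg_of_nonpos hμ (by linarith [ht.2])
  · refine ⟨1, right_mem_Icc.2 zero_le_one, fun s hs t ht => ?_⟩
    rw [uIcc_of_ge hs.2] at ht
    exact mul_nonpos_of_nonpos_of_nonneg hμ.le (by linarith [ht.1])

theorem ContractingWith.norm_fixedPoint_le {E : Type*} [NormedAddCommGroup E] [CompleteSpace E]
    {K : NNReal} {f : E → E} (hf : ContractingWith K f) :
    ‖fixedPoint f hf‖ ≤ ‖f 0‖ / (1 - K) := by
  simpa only [dist_zero_left] using hf.dist_fixedPoint_le 0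

lemma exists_eq_mul_one_sub_of_norm_le {T : (ℝ → ℂ) → ℝ → ℂ} {q : ℝ → ℂ} {κ Mq : ℝ}
    (hq : Continuous q) (hMq : ∀ t ∈ Icc (0:ℝ) 1, ‖q t‖ ≤ Mq) (hκ : κ * Mq ≤ 1 / 2)
    (hTc : ∀ ψ, Continuous ψ → Continuous (T ψ))
    (hTsub : ∀ ψ₁ ψ₂, Continuous ψ₁ → Continuous ψ₂ → T (ψ₁ - ψ₂) = T ψ₁ - T ψ₂)
    (hT : ∀ ψ P, Continuous ψ → (∀ t ∈ Icc (0:ℝ) 1, ‖ψ t‖ ≤ P) →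
      ∀ x ∈ Icc (0:ℝ) 1, ‖T ψ x‖ ≤ κ * P) :
    ∃ ψ, Continuous ψ ∧ (∀ x ∈ Icc (0:ℝ) 1, ψ x = q x * (1 - T ψ x)) ∧
      ∀ x ∈ Icc (0:ℝ) 1, ‖ψ x‖ ≤ 2 * Mq := by
  let extend (f : C(Icc (0:ℝ) 1, ℂ)) : ℝ → ℂ := IccExtend zero_le_one f
  have hext : ∀ f, Continuous (extend f) := fun f => f.continuous.Icc_extend'
  have hext_of_mem : ∀ f, ∀ x (hx : x ∈ Icc (0:ℝ) 1), extend f x = f ⟨x, hx⟩ :=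
    fun f _ hx => IccExtend_of_mem _ _ hx
  let Φ (f : C(Icc (0:ℝ) 1, ℂ)) : C(Icc (0:ℝ) 1, ℂ) :=
    ⟨fun x => q x * (1 - T (extend f) x),
      (hq.mul (continuous_const.sub (hTc _ (hext f)))).comp continuous_subtype_val⟩
  have hhalf : ((1 / 2 : NNReal) : ℝ) = 1 / 2 := by norm_num
  have hlip : LipschitzWith (1 / 2) Φ := by
    refine LipschitzWith.of_dist_le_mul fun f g => (ContinuousMap.dist_le (by positivity)).2 ?_
    intro x
    have hfg : ∀ t ∈ Icc (0:ℝ) 1, ‖(extend f - extend g) t‖ ≤ dist f g := fun t _ =>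
      (dist_eq_norm _ _).symm.trans_le (ContinuousMap.dist_apply_le_dist _)
    have hTfg := hT _ _ ((hext f).sub (hext g)) hfg x x.2
    rw [hTsub _ _ (hext f) (hext g)] at hTfg
    have hd := dist_nonneg (x := f) (y := g)
    calc dist (Φ f x) (Φ g x) = ‖q x‖ * ‖(T (extend f) - T (extend g)) x‖ := by
          rw [dist_eq_norm, ← norm_mul, ← norm_neg]
          congr 1
          simp only [Φ, ContinuousMap.coe_mk, Pi.sub_apply]
          ring
      _ ≤ Mq * (κ * dist f g) := mul_le_mul (hMq x x.2) hTfg (norm_nonneg _)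
          ((norm_nonneg _).trans (hMq x x.2))
      _ ≤ (1 / 2 : NNReal) * dist f g := by
          rw [hhalf]
          nlinarith
  have hcw : ContractingWith (1 / 2) Φ := ⟨by rw [← NNReal.coe_lt_coe]; norm_num, hlip⟩
  set fp := ContractingWith.fixedPoint Φ hcw
  refine ⟨extend fp, hext fp, fun x hx => ?_, fun x hx => ?_⟩
  · calc extend fp x = Φ fp ⟨x, hx⟩ := by rw [hext_of_mem fp x hx, hcw.fixedPoint_isFixedPt.eq]
      _ = q x * (1 - T (extend fp) x) := rfl
  have hMq0 : 0 ≤ Mq := (norm_nonneg _).trans (hMq 0 (left_mem_Icc.2 zero_le_one))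
  have hT0 : ∀ x ∈ Icc (0:ℝ) 1, T (extend 0) x = 0 := fun x hx => norm_le_zero_iff.1
    ((hT _ 0 (hext 0) (fun t ht => by simp [hext_of_mem 0 t ht]) x hx).trans_eq (mul_zero κ))
  have hΦ0 : ‖Φ 0‖ ≤ Mq := (ContinuousMap.norm_le _ hMq0).2 fun x => by
    simpa [Φ, hT0 x x.2] using hMq x x.2
  calc ‖extend fp x‖ = ‖fp ⟨x, hx⟩‖ := by rw [hext_of_mem fp x hx]
    _ ≤ ‖fp‖ := fp.norm_coe_le_norm _
    _ ≤ ‖Φ 0‖ / (1 - (1 / 2 : NNReal)) := hcw.norm_fixedPoint_le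
    _ ≤ 2 * Mq := by
      rw [hhalf]
      linarith [(by ring : ‖Φ 0‖ / (1 - 1 / 2) = 2 * ‖Φ 0‖)]

lemma hasDerivAt_exp_mul_add_sub {φ w m ψ : ℝ → ℂ} {a : ℝ → ℝ} {μ : ℂ} {x α : ℝ}
    (hφ : HasDerivAt φ (μ + a x) x) (ha : HasDerivAt a α x) (hw : HasDerivAt w (-m x) x)
    (hm : HasDerivAt m (-(2 * μ) * m x + (ψ x - 2 * a x * m x)) x) :
    HasDerivAt (fun y => Complex.exp (φ y) * ((μ + a y) * w y - m y))
      (Complex.exp (φ x) * ((μ + a x) ^ 2 * w x + α * w x - ψ x)) x :=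
  (hφ.cexp.fun_mul ((ha.ofReal_comp.const_add μ |>.fun_mul hw).fun_sub hm)).congr_deriv
    (by ring)

lemma exists_solution_of_eq_mul_one_sub_volterra {a α b : ℝ → ℝ} {μ : ℂ} {c : ℝ} {ψ : ℝ → ℂ}
    (ha : ∀ x, HasDerivAt a (α x) x) (hψ : Continuous ψ)
    (hfix : ∀ x ∈ Icc (0:ℝ) 1, ψ x = (α x + a x ^ 2 + b x : ℝ) * (1 - volterra a μ c ψ x)) :
    ∃ u u' : ℝ → ℂ, (∀ x, HasDerivAt u (u' x) x) ∧
      (∀ x ∈ Icc (0:ℝ) 1, HasDerivAt u' ((μ ^ 2 + 2 * μ * a x - b x) * u x) x) ∧ u 0 = 1 ∧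
      ∀ x, u x * Complex.exp (-phase a μ x) - 1 = -volterra a μ c ψ x := by
  have hac : Continuous a := continuous_iff_continuousAt.2 fun x => (ha x).continuousAt
  set m := duhamel (fun t => 2 * phase a μ t) ψ c
  set w := fun x => 1 - volterra a μ c ψ x
  have hw : ∀ x, HasDerivAt w (-m x) x := fun x => (hasDerivAt_volterra hac hψ x).const_sub 1
  refine ⟨fun x => Complex.exp (phase a μ x) * w x,
    fun x => Complex.exp (phase a μ x) * ((μ + a x) * w x - m x), fun x => ?_, fun x hx => ?_,
    by simp [w, volterra, phase_zero], fun x => ?_⟩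
  · exact ((hasDerivAt_phase hac μ x).cexp.mul (hw x)).congr_deriv (by ring)
  · refine (hasDerivAt_exp_mul_add_sub (hasDerivAt_phase hac μ x) (ha x) (hw x)
      (hasDerivAt_duhamel_phase hac hψ x)).congr_deriv ?_
    rw [hfix x hx]
    push_cast
    ring
  · rw [mul_right_comm, ← Complex.exp_add, add_neg_cancel, Complex.exp_zero, one_mul]
    simp [w]

theorem exists_solution_of_hasDerivAt {a α b : ℝ → ℝ} (ha : ∀ x, HasDerivAt a (α x) x)
    (hα : Continuous α) (hb : Continuous b) :
    ∃ C, 0 < C ∧ ∀ μ : ℂ, C ≤ ‖μ‖ → ∃ u u' : ℝ → ℂ, (∀ x, HasDerivAt u (u' x) x) ∧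
      (∀ x ∈ Icc (0:ℝ) 1, HasDerivAt u' ((μ ^ 2 + 2 * μ * a x - b x) * u x) x) ∧ u 0 = 1 ∧
      ∀ x ∈ Icc (0:ℝ) 1, ‖u x * Complex.exp (-phase a μ x) - 1‖ ≤ C / ‖μ‖ := by
  have hac : Continuous a := continuous_iff_continuousAt.2 fun x => (ha x).continuousAt
  have hI : IsCompact (Icc (0:ℝ) 1) := isCompact_Icc
  set q : ℝ → ℂ := fun t => ((α t + a t ^ 2 + b t : ℝ) : ℂ)
  obtain ⟨Ma, hMa⟩ := hI.exists_bound_of_continuousOn hac.continuousOn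
  obtain ⟨MA, hMA⟩ := hI.exists_bound_of_continuousOn (continuous_primitive (μ := volume)
    (fun _ _ => hac.intervalIntegrable _ _) 0).continuousOn
  obtain ⟨Mq, hMq⟩ := hI.exists_bound_of_continuousOn (by fun_prop : Continuous q).continuousOn
  simp only [Real.norm_eq_abs] at hMa hMA
  have hMa0 : 0 ≤ Ma := (abs_nonneg _).trans (hMa 0 (left_mem_Icc.2 zero_le_one))
  have hMq0 : 0 ≤ Mq := (norm_nonneg _).trans (hMq 0 (left_mem_Icc.2 zero_le_one))
  set K := (1 + Ma) * Real.exp (4 * MA) + 1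
  have hK : 0 < K := by positivity
  refine ⟨2 * K * Mq + 1, by positivity, fun μ hμ => ?_⟩
  have hμ0 : 0 < ‖μ‖ := by linarith [mul_nonneg (mul_nonneg zero_le_two hK.le) hMq0]
  obtain ⟨c, hc, hμc⟩ := exists_basePoint μ
  have hT : ∀ ψ P, Continuous ψ → (∀ t ∈ Icc (0:ℝ) 1, ‖ψ t‖ ≤ P) →
      ∀ x ∈ Icc (0:ℝ) 1, ‖volterra a μ c ψ x‖ ≤ K / ‖μ‖ * P := fun ψ P hψ hP x hx =>
    (norm_volterra_le hMa hMA hP hc hμc hac hψ (norm_pos_iff.1 hμ0) hx).trans_eq (by ring)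
  obtain ⟨ψ, hψ, hfix, hψP⟩ := exists_eq_mul_one_sub_of_norm_le (by fun_prop) hMq
    (by rw [div_mul_eq_mul_div, div_le_iff₀ hμ0]; linarith)
    (fun _ => continuous_volterra hac) (fun _ _ => volterra_sub hac) hT
  obtain ⟨u, u', hu, hu', hu0, hue⟩ := exists_solution_of_eq_mul_one_sub_volterra ha hψ hfix
  refine ⟨u, u', hu, hu', hu0, fun x hx => ?_⟩
  rw [hue, norm_neg]
  calc ‖volterra a μ c ψ x‖ ≤ K / ‖μ‖ * (2 * Mq) := hT ψ _ hψ hψP x hx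
    _ ≤ (2 * K * Mq + 1) / ‖μ‖ := by
      rw [div_mul_eq_mul_div]
      gcongr
      linarith

lemma exists_hasDerivAt_eqOn_of_contDiffOn_Icc {f : ℝ → ℝ} {lo hi : ℝ} (hlohi : lo < hi)
    (hf : ContDiffOn ℝ 1 f (Icc lo hi)) :
    ∃ g g' : ℝ → ℝ, (∀ x, HasDerivAt g (g' x) x) ∧ Continuous g' ∧ EqOn g f (Icc lo hi) := by
  set f' := IccExtend hlohi.le ((Icc lo hi).domRestrict (derivWithin f (Icc lo hi)))
  have hf' : Continuous f' := (continuousOn_iff_continuous_domRestrict.1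
    (hf.continuousOn_derivWithin (uniqueDiffOn_Icc hlohi) le_rfl)).Icc_extend'
  refine ⟨fun x => f lo + ∫ t in lo..x, f' t, f',
    fun x => (hf'.integral_hasStrictDerivAt lo x).hasDerivAt.const_add _, hf', fun x hx => ?_⟩
  have hderiv : ∀ t ∈ Ioo lo hi, HasDerivAt f (f' t) t := fun t ht => by
    rw [show f' t = derivWithin f (Icc lo hi) t from IccExtend_of_mem _ _ (Ioo_subset_Icc_self ht)]
    exact (hf.differentiableOn one_ne_zero t (Ioo_subset_Icc_self ht)).hasDerivWithinAt.hasDerivAt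
      (Icc_mem_nhds ht.1 ht.2)
  have hftc := integral_eq_sub_of_hasDeriv_right_of_le hx.1
    (hf.continuousOn.mono (Icc_subset_Icc_right hx.2))
    (fun t ht => (hderiv t ⟨ht.1, ht.2.trans_le hx.2⟩).hasDerivWithinAt)
    (hf'.intervalIntegrable _ _)
  simp only [hftc]
  ring

theorem exists_solution_of_contDiffOn {a b : ℝ → ℝ} (ha : ContDiffOn ℝ 1 a (Icc 0 1))
    (hb : ContinuousOn b (Icc 0 1)) :
    ∃ C, 0 < C ∧ ∀ μ : ℂ, C ≤ ‖μ‖ → ∃ u u' : ℝ → ℂ,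
      (∀ x ∈ Icc (0:ℝ) 1, HasDerivAt u (u' x) x) ∧
      (∀ x ∈ Icc (0:ℝ) 1, HasDerivAt u' ((μ ^ 2 + 2 * μ * a x - b x) * u x) x) ∧ u 0 = 1 ∧
      ∀ x ∈ Icc (0:ℝ) 1, ‖u x * Complex.exp (-phase a μ x) - 1‖ ≤ C / ‖μ‖ := by
  obtain ⟨a', α, ha', hα, haa'⟩ := exists_hasDerivAt_eqOn_of_contDiffOn_Icc zero_lt_one ha
  have hb' : Continuous (IccExtend zero_le_one ((Icc 0 1).domRestrict b)) :=
    (continuousOn_iff_continuous_domRestrict.1 hb).Icc_extend'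
  obtain ⟨C, hC, hsol⟩ := exists_solution_of_hasDerivAt ha' hα hb'
  refine ⟨C, hC, fun μ hμ => ?_⟩
  obtain ⟨u, u', hu, hu', hu0, hub⟩ := hsol μ hμ
  refine ⟨u, u', fun x _ => hu x, fun x hx => ?_, hu0, fun x hx => ?_⟩
  · simpa only [haa' hx, IccExtend_of_mem _ _ hx, domRestrict_apply] using hu' x hx
  · simpa only [phase_congr haa' μ hx] using hub x hx

/-- The leading-order case of Lemma 3.1: for `a` continuously differentiable on
`[0,1]` and `b` continuous on `[0,1]`, for `Im λ` large there exist solutions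
`u₊, u₋` of `u'' = (λ² + 2λa(x) − b(x))u` with `u_±(0) = 1` and
`u_±(x) = e^{±λx ± ∫₀ˣ a}(1 + O(1/λ))` uniformly on `[0,1]`. -/
theorem stmt8 (a b : ℝ → ℝ)
    (ha : ContDiffOn ℝ 1 a (Set.Icc 0 1)) (hb : ContinuousOn b (Set.Icc 0 1)) :
    ∃ C : ℝ, 0 < C ∧ ∃ R : ℝ, 0 < R ∧ ∀ lam : ℂ, R ≤ lam.im →
      -- the solution u₊
      (∃ u u' : ℝ → ℂ,
        (∀ x ∈ Set.Icc (0:ℝ) 1, HasDerivAt u (u' x) x) ∧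
        (∀ x ∈ Set.Icc (0:ℝ) 1,
          HasDerivAt u' ((lam ^ 2 + 2 * lam * (a x : ℂ) - (b x : ℂ)) * u x) x) ∧
        u 0 = 1 ∧
        (∀ x ∈ Set.Icc (0:ℝ) 1,
          ‖u x * Complex.exp (-(lam * (x : ℂ)) - ((∫ t in (0:ℝ)..x, a t : ℝ) : ℂ)) - 1‖
            ≤ C / ‖lam‖)) ∧
      -- the solution u₋
      (∃ u u' : ℝ → ℂ,
        (∀ x ∈ Set.Icc (0:ℝ) 1, HasDerivAt u (u' x) x) ∧
        (∀ x ∈ Set.Icc (0:ℝ) 1,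
          HasDerivAt u' ((lam ^ 2 + 2 * lam * (a x : ℂ) - (b x : ℂ)) * u x) x) ∧
        u 0 = 1 ∧
        (∀ x ∈ Set.Icc (0:ℝ) 1,
          ‖u x * Complex.exp (lam * (x : ℂ) + ((∫ t in (0:ℝ)..x, a t : ℝ) : ℂ)) - 1‖
            ≤ C / ‖lam‖)) := by
  obtain ⟨Cp, hCp, hsolp⟩ := exists_solution_of_contDiffOn ha hb
  obtain ⟨Cm, hCm, hsolm⟩ := exists_solution_of_contDiffOn ha.neg hb
  set C := max Cp Cm
  refine ⟨C, lt_max_of_lt_left hCp, C, lt_max_of_lt_left hCp, fun lam hlam => ?_⟩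
  have hC : C ≤ ‖lam‖ := hlam.trans ((le_abs_self _).trans (Complex.abs_im_le_norm lam))
  obtain ⟨u, u', hu, hu', hu0, hub⟩ := hsolp lam ((le_max_left _ _).trans hC)
  obtain ⟨v, v', hv, hv', hv0, hvb⟩ :=
    hsolm (-lam) (by rw [norm_neg]; exact (le_max_right _ _).trans hC)
  refine ⟨⟨u, u', hu, hu', hu0, fun x hx => ?_⟩, ⟨v, v', hv, fun x hx => ?_, hv0, fun x hx => ?_⟩⟩
  · rw [← neg_add']
    exact (hub x hx).trans (div_le_div_of_nonneg_right (le_max_left _ _) (norm_nonneg _))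
  · convert hv' x hx using 2
    push_cast
    ring
  · have hvbx := hvb x hx
    rw [phase_neg, neg_neg, norm_neg] at hvbx
    exact hvbx.trans (div_le_div_of_nonneg_right (le_max_right _ _) (norm_nonneg _))
end
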